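/- Let W, Z, S be random variables with values in finite sets such that W is independent of the pair (Z, S), and let X = f(W, Z) for some function f. If H(W | X, Z, S) = 0, then H(X | Z) ≥ H(W). Moreover, under the same hypotheses, H(W | X, Z) = 0. -/

import Mathlib

/-- The probability that the finitely-valued random variable `X` (on the finite
probability space with mass function `P`) takes the value `a`. -/
noncomputable def rvDist {Ω α : Type*} [Fintype Ω] [DecidableEq α]
    (P : Ω → ℝ) (X : Ω → α) (a : α) : ℝ :=
  ∑ ω : Ω, if X ω = a then P ω else 0

/-- Shannon entropy of a finitely-valued random variable (in nats, with the
convention `0 log 0 = 0`, which holds since `Real.log 0 = 0`). -/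
noncomputable def rvEntropy {Ω α : Type*} [Fintype Ω] [Fintype α] [DecidableEq α]
    (P : Ω → ℝ) (X : Ω → α) : ℝ :=
  -∑ a : α, rvDist P X a * Real.log (rvDist P X a)

/-- Conditional Shannon entropy `H(X | Y) = H(X, Y) - H(Y)`. -/
noncomputable def rvCondEntropy {Ω α β : Type*} [Fintype Ω] [Fintype α] [Fintype β]
    [DecidableEq α] [DecidableEq β] (P : Ω → ℝ) (X : Ω → α) (Y : Ω → β) : ℝ :=
  rvEntropy P (fun ω => (X ω, Y ω)) - rvEntropy P Y

/-! Vanishing of `H(W | X, Z, S)` means that on the support of the joint law, `W` is a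
function of `(X, Z, S)`. Independence of `W` from `(Z, S)` makes every `w` in the support of
`W` occur together with every `(z, s)` in the support of `(Z, S)`, so `f (·, z)` is injective on
the support of `W` whenever `z` is in the support of `Z`. Hence `(W, Z) ↦ (X, Z)` is injective on
the support of `(W, Z)`, and `H(W, X, Z) = H(X, Z) = H(W, Z) = H(W) + H(Z)`: in fact
`H(X | Z) = H(W)`. -/

open Finset Real

section rvDist

variable {Ω α β γ : Type*} [Fintype Ω] [DecidableEq α] [DecidableEq β] [DecidableEq γ]
  (P : Ω → ℝ)

lemma rvDist_nonneg (hP : ∀ ω, 0 ≤ P ω) (X : Ω → α) (a : α) : 0 ≤ rvDist P X a :=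
  sum_nonneg fun ω _ => by split_ifs <;> simp [hP ω]

lemma sum_rvDist [Fintype α] (X : Ω → α) : ∑ a, rvDist P X a = ∑ ω, P ω := by
  simp only [rvDist]
  rw [sum_comm]
  simp

lemma rvDist_comp [Fintype α] (φ : α → β) (X : Ω → α) (b : β) :
    rvDist P (fun ω => φ (X ω)) b = ∑ a with φ a = b, rvDist P X a := by
  simp only [rvDist]
  rw [sum_comm]
  simp

lemma rvDist_comp_apply_of_injective {φ : α → β} (hφ : φ.Injective) (X : Ω → α) (a : α) :
    rvDist P (fun ω => φ (X ω)) (φ a) = rvDist P X a := by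
  simp only [rvDist, hφ.eq_iff]

lemma rvDist_fst [Fintype β] (A : Ω → α) (B : Ω → β) (a : α) :
    rvDist P A a = ∑ b, rvDist P (fun ω => (A ω, B ω)) (a, b) := by
  simp only [rvDist]
  rw [sum_comm]
  simp [Prod.ext_iff, ite_and]

lemma rvDist_snd [Fintype α] (A : Ω → α) (B : Ω → β) (b : β) :
    rvDist P B b = ∑ a, rvDist P (fun ω => (A ω, B ω)) (a, b) := by
  simp only [rvDist]
  rw [sum_comm]
  simp [Prod.ext_iff, ite_and]

lemma rvDist_pair_comp_right [Fintype β] (A : Ω → α) (B : Ω → β) (ψ : β → γ) (a : α) (c : γ) :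
    rvDist P (fun ω => (A ω, ψ (B ω))) (a, c)
      = ∑ b with ψ b = c, rvDist P (fun ω => (A ω, B ω)) (a, b) := by
  simp only [rvDist]
  rw [sum_comm]
  simp [Prod.ext_iff, ite_and]

lemma rvEntropy_eq_sum_negMulLog [Fintype α] (X : Ω → α) :
    rvEntropy P X = ∑ a, negMulLog (rvDist P X a) := by
  simp [rvEntropy, negMulLog, sum_neg_distrib]

end rvDist

section independence

variable {Ω α β γ : Type*} [Fintype Ω] [DecidableEq α] [DecidableEq β] [DecidableEq γ]
  {P : Ω → ℝ} {A : Ω → α} {B : Ω → β}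

def RvIndep (P : Ω → ℝ) (A : Ω → α) (B : Ω → β) : Prop :=
  ∀ a b, rvDist P (fun ω => (A ω, B ω)) (a, b) = rvDist P A a * rvDist P B b

lemma RvIndep.comp_right [Fintype β] (h : RvIndep P A B) (ψ : β → γ) :
    RvIndep P A (fun ω => ψ (B ω)) := by
  intro a c
  rw [rvDist_pair_comp_right, rvDist_comp P ψ B, mul_sum]
  exact sum_congr rfl fun b _ => h a b

lemma RvIndep.rvEntropy_pair [Fintype α] [Fintype β] (hP1 : ∑ ω, P ω = 1)
    (h : RvIndep P A B) :
    rvEntropy P (fun ω => (A ω, B ω)) = rvEntropy P A + rvEntropy P B := by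
  simp only [rvEntropy_eq_sum_negMulLog, Fintype.sum_prod_type, h _, negMulLog_mul,
    sum_add_distrib, ← sum_mul, ← mul_sum, sum_rvDist, hP1, one_mul]

end independence

lemma sum_apply_sum_fiberwise_of_injOn {ι κ : Type*} [Fintype ι] [Fintype κ] [DecidableEq κ]
    {F : ℝ → ℝ} (hF : F 0 = 0) {φ : ι → κ} {g : ι → ℝ} (hφ : Set.InjOn φ {i | g i ≠ 0}) :
    ∑ k, F (∑ i with φ i = k, g i) = ∑ i, F (g i) := by
  rw [← sum_fiberwise univ φ (fun i => F (g i))]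
  refine sum_congr rfl fun k _ => ?_
  by_cases h : ∃ i, φ i = k ∧ g i ≠ 0
  · obtain ⟨i, rfl, hi⟩ := h
    have hzero : ∀ j ∈ univ.filter (φ · = φ i), j ≠ i → g j = 0 := fun j hj hji =>
      by_contra fun hj0 => hji (hφ hj0 hi (mem_filter.1 hj).2)
    rw [sum_eq_single_of_mem i (by simp) hzero,
      sum_eq_single_of_mem i (by simp) fun j hj hji => by rw [hzero j hj hji, hF]]
  · push Not at h
    rw [sum_eq_zero fun i hi => h i (mem_filter.1 hi).2, hF,
      sum_eq_zero fun i hi => by rw [h i (mem_filter.1 hi).2, hF]]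

section entropy

variable {Ω α β : Type*} [Fintype Ω] [Fintype α] [Fintype β] [DecidableEq α] [DecidableEq β]
  {P : Ω → ℝ}

lemma rvEntropy_comp_of_injOn {φ : α → β} {X : Ω → α}
    (hφ : Set.InjOn φ {a | rvDist P X a ≠ 0}) :
    rvEntropy P (fun ω => φ (X ω)) = rvEntropy P X := by
  simp only [rvEntropy_eq_sum_negMulLog, rvDist_comp]
  exact sum_apply_sum_fiberwise_of_injOn negMulLog_zero hφ

lemma rvCondEntropy_eq_sum (A : Ω → α) (B : Ω → β) :
    rvCondEntropy P A B = ∑ b, ∑ a, rvDist P (fun ω => (A ω, B ω)) (a, b) *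
      (log (rvDist P B b) - log (rvDist P (fun ω => (A ω, B ω)) (a, b))) := by
  have hB : ∀ b, rvDist P B b * log (rvDist P B b)
      = ∑ a, rvDist P (fun ω => (A ω, B ω)) (a, b) * log (rvDist P B b) := fun b => by
    rw [← sum_mul, ← rvDist_snd]
  simp only [rvCondEntropy, rvEntropy, Fintype.sum_prod_type, hB, mul_sub, sum_sub_distrib]
  rw [sum_comm (γ := α)]
  ring

lemma rvDist_pair_eq_of_rvCondEntropy_eq_zero (hP : ∀ ω, 0 ≤ P ω) {A : Ω → α} {B : Ω → β}
    (h0 : rvCondEntropy P A B = 0) {a : α} {b : β}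
    (hab : rvDist P (fun ω => (A ω, B ω)) (a, b) ≠ 0) :
    rvDist P (fun ω => (A ω, B ω)) (a, b) = rvDist P B b := by
  set j := rvDist P (fun ω => (A ω, B ω))
  have hj : ∀ p, 0 ≤ j p := rvDist_nonneg P hP _
  have hle : ∀ a b, j (a, b) ≤ rvDist P B b := fun a b => by
    rw [rvDist_snd P A B]
    exact single_le_sum (fun a _ => hj (a, b)) (mem_univ a)
  have hterm : ∀ b a, 0 ≤ j (a, b) * (log (rvDist P B b) - log (j (a, b))) := fun b a => by
    rcases (hj (a, b)).eq_or_lt with h | h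
    · rw [← h, zero_mul]
    · exact mul_nonneg h.le (sub_nonneg.2 (log_le_log h (hle a b)))
  rw [rvCondEntropy_eq_sum, sum_eq_zero_iff_of_nonneg fun b _ => sum_nonneg fun a _ => hterm b a]
    at h0
  have hzero := (sum_eq_zero_iff_of_nonneg fun a _ => hterm b a).1 (h0 b (mem_univ b)) a
    (mem_univ a)
  have hpos : 0 < j (a, b) := (hj _).lt_of_ne' hab
  rw [mul_eq_zero, sub_eq_zero, or_iff_right hab] at hzero
  exact (log_injOn_pos (hpos.trans_le (hle a b)) hpos hzero).symm

lemma eq_of_rvCondEntropy_eq_zero (hP : ∀ ω, 0 ≤ P ω) {A : Ω → α} {B : Ω → β}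
    (h0 : rvCondEntropy P A B = 0) {a a' : α} {b : β}
    (ha : rvDist P (fun ω => (A ω, B ω)) (a, b) ≠ 0)
    (ha' : rvDist P (fun ω => (A ω, B ω)) (a', b) ≠ 0) : a = a' := by
  by_contra hne
  have hsum : rvDist P (fun ω => (A ω, B ω)) (a, b) + rvDist P (fun ω => (A ω, B ω)) (a', b)
      ≤ rvDist P B b := by
    rw [rvDist_snd P A B, ← sum_pair (f := fun a => rvDist P (fun ω => (A ω, B ω)) (a, b)) hne]
    exact sum_le_sum_of_subset_of_nonneg (subset_univ _) fun _ _ _ => rvDist_nonneg P hP _ _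
  rw [rvDist_pair_eq_of_rvCondEntropy_eq_zero hP h0 ha] at hsum
  exact ha' (le_antisymm (by linarith) (rvDist_nonneg P hP _ _))

end entropy

lemma injOn_support_of_rvCondEntropy_eq_zero {Ω σW σZ σS σX : Type*} [Fintype Ω] [Fintype σW]
    [Fintype σZ] [Fintype σS] [Fintype σX] [DecidableEq σW] [DecidableEq σZ] [DecidableEq σS]
    [DecidableEq σX] {P : Ω → ℝ} (hP : ∀ ω, 0 ≤ P ω) {W : Ω → σW} {Z : Ω → σZ} {S : Ω → σS}
    (f : σW → σZ → σX) (hInd : RvIndep P W (fun ω => (Z ω, S ω)))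
    (h0 : rvCondEntropy P W (fun ω => (f (W ω) (Z ω), Z ω, S ω)) = 0) :
    Set.InjOn (fun p : σW × σZ => (f p.1 p.2, p.2))
      {p | rvDist P (fun ω => (W ω, Z ω)) p ≠ 0} := by
  rintro ⟨w, z⟩ hw ⟨w', z'⟩ hw' heq
  obtain ⟨hf, rfl⟩ : f w z = f w' z' ∧ z = z' := Prod.mk.inj heq
  have hWZ : RvIndep P W Z := hInd.comp_right Prod.fst
  simp only [Set.mem_ofPred_eq, hWZ w, hWZ w'] at hw hw'
  obtain ⟨s, -, hs⟩ := exists_ne_zero_of_sum_ne_zero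
    ((rvDist_fst P Z S z).symm.trans_ne (right_ne_zero_of_mul hw))
  have hφ : Function.Injective fun p : σW × σZ × σS => (p.1, f p.1 p.2.1, p.2.1, p.2.2) :=
    fun p q h => by simp only [Prod.ext_iff] at h ⊢; tauto
  have hlaw : ∀ v, rvDist P (fun ω => (W ω, f (W ω) (Z ω), Z ω, S ω)) (v, f v z, z, s)
      = rvDist P W v * rvDist P (fun ω => (Z ω, S ω)) (z, s) := fun v =>
    (rvDist_comp_apply_of_injective P hφ (fun ω => (W ω, Z ω, S ω)) (v, z, s)).trans
      (hInd v (z, s))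
  refine Prod.ext (eq_of_rvCondEntropy_eq_zero hP h0 (b := (f w z, z, s)) ?_ ?_) rfl
  · rw [hlaw]
    exact mul_ne_zero (left_ne_zero_of_mul hw) hs
  · rw [hf, hlaw]
    exact mul_ne_zero (left_ne_zero_of_mul hw') hs

/-- Let `W` be independent of the pair `(Z, S)` and let
`X = f(W, Z)`. If `H(W | X, Z, S) = 0`, then `H(X | Z) ≥ H(W)`; moreover
`H(W | X, Z) = 0`. -/
theorem stmt16 {Ω σW σZ σS σX : Type*} [Fintype Ω] [Fintype σW] [Fintype σZ]
    [Fintype σS] [Fintype σX] [DecidableEq σW] [DecidableEq σZ] [DecidableEq σS]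
    [DecidableEq σX]
    (P : Ω → ℝ) (hP : ∀ ω, 0 ≤ P ω) (hP1 : ∑ ω : Ω, P ω = 1)
    (W : Ω → σW) (Z : Ω → σZ) (S : Ω → σS)
    (f : σW → σZ → σX) (X : Ω → σX) (hX : X = fun ω => f (W ω) (Z ω))
    (hInd : ∀ (w : σW) (z : σZ) (s : σS),
      rvDist P (fun ω => (W ω, Z ω, S ω)) (w, z, s)
        = rvDist P W w * rvDist P (fun ω => (Z ω, S ω)) (z, s))
    (h0 : rvCondEntropy P W (fun ω => (X ω, Z ω, S ω)) = 0) :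
    rvEntropy P W ≤ rvCondEntropy P X Z ∧
      rvCondEntropy P W (fun ω => (X ω, Z ω)) = 0 := by
  subst hX
  have hWZS : RvIndep P W (fun ω => (Z ω, S ω)) := fun w zs => hInd w zs.1 zs.2
  have hWZ : rvEntropy P (fun ω => (W ω, Z ω)) = rvEntropy P W + rvEntropy P Z :=
    (hWZS.comp_right Prod.fst).rvEntropy_pair hP1
  have hXZ : rvEntropy P (fun ω => (f (W ω) (Z ω), Z ω)) = rvEntropy P (fun ω => (W ω, Z ω)) :=
    (rvEntropy_comp_of_injOn (injOn_support_of_rvCondEntropy_eq_zero hP f hWZS h0) :)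
  have hinj : Set.InjOn (fun p : σW × σZ => (p.1, f p.1 p.2, p.2))
      {p | rvDist P (fun ω => (W ω, Z ω)) p ≠ 0} :=
    Set.injOn_of_injective fun p q h => by simp only [Prod.ext_iff] at h ⊢; tauto
  have hWXZ : rvEntropy P (fun ω => (W ω, f (W ω) (Z ω), Z ω))
      = rvEntropy P (fun ω => (W ω, Z ω)) :=
    (rvEntropy_comp_of_injOn hinj :)
  constructor <;> simp only [rvCondEntropy] <;> linarith
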